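/- If p ∈ ℂ[z₁,…,z_d] has no zeros in 𝔻^d and p̃ is its reflection, then for every ζ ∈ 𝕋^d the non-tangential limit of p̃(z)/p(z) as z → ζ in 𝔻^d exists and is an element of the unit circle 𝕋. -/

import Mathlib

/-!
Write `f = p̃ / p` and `N = ∑ nᵢ`. Along the radius `t ↦ tζ`, `f` equals `ζ^n tᴺ conj (q (1/t)) / q t`
with `q(w) = p(wζ)`; dividing out the zero of `q` at `1` shows that this has a unimodular limit
`L` as `t → 1⁻`.

On the polydisk `|p̃| ≤ |p|`: restricted to the Möbius disc through `z`, `p` becomes (after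
clearing denominators) a one-variable polynomial of degree `≤ N` without zeros in `𝔻`, whose
constant term is `p(z)` and whose coefficient of `sᴺ` is `conj (p̃ z)`, and the product of
the roots has modulus `≥ 1`. So `f` maps `𝔻^d` holomorphically into the closed disc, and
Schwarz–Pick along the analytic disc through `z` and `w` gives
`(1 - r) |f z - f w| ≤ r (1 - |f w|²)` as soon as every pseudo-hyperbolic distance
`ρ(zᵢ, wᵢ)` is at most `r < 1`. For `z` in a non-tangential region and `w = |z_{i₀}| ζ` these
distances are bounded by some `r < 1` depending only on `c`, while `f w → L` with `|L| = 1`,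
hence `f z → L`.
-/

open MvPolynomial Filter

/-- A non-tangential approach region to `ζ ∈ 𝕋^d` inside the polydisk: all of the
quantities `|z_i − ζ_i|` and `1 − |z_i|` are pairwise comparable within factor `c`. -/
def PolydiskAR (d : ℕ) (ζ : Fin d → ℂ) (c : ℝ) : Set (Fin d → ℂ) :=
  {z | (∀ i, ‖z i‖ < 1) ∧ ∀ i j,
    ‖z i - ζ i‖ ≤ c * (1 - ‖z j‖) ∧ (1 - ‖z i‖) ≤ c * ‖z j - ζ j‖ ∧
    ‖z i - ζ i‖ ≤ c * ‖z j - ζ j‖ ∧ (1 - ‖z i‖) ≤ c * (1 - ‖z j‖)}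

open ComplexConjugate Metric Set Topology

noncomputable section

def mobius (a z : ℂ) : ℂ := (z - a) / (1 - conj a * z)

lemma norm_one_sub_conj_mul_sq_sub_norm_sub_sq (a z : ℂ) :
    ‖1 - conj a * z‖ ^ 2 - ‖z - a‖ ^ 2 = (1 - ‖a‖ ^ 2) * (1 - ‖z‖ ^ 2) := by
  simp only [Complex.sq_norm, Complex.normSq_apply, Complex.sub_re, Complex.sub_im,
    Complex.mul_re, Complex.mul_im, Complex.one_re, Complex.one_im, Complex.conj_re,
    Complex.conj_im]
  ring

lemma one_sub_conj_mul_ne_zero {a z : ℂ} (ha : ‖a‖ < 1) (hz : ‖z‖ ≤ 1) :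
    1 - conj a * z ≠ 0 := by
  have : ‖conj a * z‖ < 1 := by
    rw [norm_mul, RCLike.norm_conj]
    nlinarith [norm_nonneg a, norm_nonneg z]
  rw [sub_ne_zero]
  rintro h
  simp [← h] at this

lemma norm_one_sub_conj_mul_self {a : ℂ} (ha : ‖a‖ ≤ 1) : ‖1 - conj a * a‖ = 1 - ‖a‖ ^ 2 := by
  rw [Complex.conj_mul', ← Complex.ofReal_pow, ← Complex.ofReal_one, ← Complex.ofReal_sub,
    Complex.norm_real, Real.norm_of_nonneg (by nlinarith [norm_nonneg a])]

lemma norm_mobius_sq {a z : ℂ} (ha : ‖a‖ < 1) (hz : ‖z‖ ≤ 1) :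
    ‖mobius a z‖ ^ 2 = 1 - (1 - ‖a‖ ^ 2) * (1 - ‖z‖ ^ 2) / ‖1 - conj a * z‖ ^ 2 := by
  have hD : ‖1 - conj a * z‖ ^ 2 ≠ 0 := by simpa using one_sub_conj_mul_ne_zero ha hz
  rw [mobius, norm_div, div_pow, ← norm_one_sub_conj_mul_sq_sub_norm_sub_sq, sub_div,
    div_self hD, sub_sub_cancel]

lemma norm_mobius_le_one {a z : ℂ} (ha : ‖a‖ < 1) (hz : ‖z‖ ≤ 1) : ‖mobius a z‖ ≤ 1 := by
  have : 0 ≤ (1 - ‖a‖ ^ 2) * (1 - ‖z‖ ^ 2) / ‖1 - conj a * z‖ ^ 2 := by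
    apply div_nonneg _ (sq_nonneg _)
    apply mul_nonneg <;> nlinarith [norm_nonneg a, norm_nonneg z]
  have := norm_mobius_sq ha hz
  nlinarith [norm_nonneg (mobius a z)]

lemma norm_mobius_lt_one {a z : ℂ} (ha : ‖a‖ < 1) (hz : ‖z‖ < 1) : ‖mobius a z‖ < 1 := by
  have : 0 < (1 - ‖a‖ ^ 2) * (1 - ‖z‖ ^ 2) / ‖1 - conj a * z‖ ^ 2 := by
    apply div_pos _ (pow_pos (norm_pos_iff.2 (one_sub_conj_mul_ne_zero ha hz.le)) 2)
    apply mul_pos <;> nlinarith [norm_nonneg a, norm_nonneg z]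
  have := norm_mobius_sq ha hz.le
  nlinarith [norm_nonneg (mobius a z)]

@[simp] lemma mobius_self (a : ℂ) : mobius a a = 0 := by simp [mobius]

@[simp] lemma mobius_neg_zero (a : ℂ) : mobius (-a) 0 = a := by simp [mobius]

lemma mobius_neg_mobius {a z : ℂ} (ha : ‖a‖ < 1) (hz : ‖z‖ ≤ 1) :
    mobius (-a) (mobius a z) = z := by
  have hD := one_sub_conj_mul_ne_zero ha hz
  have ha' := one_sub_conj_mul_ne_zero ha ha.le
  have hD' : 1 - z * conj a ≠ 0 := by rwa [mul_comm]
  have hnum : (z - a) / (1 - conj a * z) + a = z * (1 - conj a * a) / (1 - conj a * z) := by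
    field_simp
    ring
  have hden : 1 + conj a * ((z - a) / (1 - conj a * z)) = (1 - conj a * a) / (1 - conj a * z) := by
    field_simp
    ring
  simp only [mobius, map_neg, neg_mul, sub_neg_eq_add]
  rw [hnum, hden, div_div_div_cancel_right₀ hD, mul_div_cancel_right₀ _ ha']

lemma differentiableAt_mobius {a z : ℂ} (h : 1 - conj a * z ≠ 0) :
    DifferentiableAt ℂ (mobius a) z := by
  unfold mobius
  fun_prop (disch := exact h)

-- Schwarz–Pick, via the Schwarz lemma for `mobius (ψ 0) ∘ ψ`.
lemma norm_sub_le_norm_mul_norm_one_sub_conj_mul {ψ : ℂ → ℂ}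
    (hd : DifferentiableOn ℂ ψ (ball 0 1)) (hψ : MapsTo ψ (ball 0 1) (closedBall 0 1))
    {s : ℂ} (hs : s ∈ ball (0 : ℂ) 1) :
    ‖ψ s - ψ 0‖ ≤ ‖s‖ * ‖1 - conj (ψ 0) * ψ s‖ := by
  have hψ1 : ∀ x ∈ ball (0 : ℂ) 1, ‖ψ x‖ ≤ 1 := fun x hx => by simpa using hψ hx
  have h0 : (0 : ℂ) ∈ ball (0 : ℂ) 1 := mem_ball_self one_pos
  rcases (hψ1 0 h0).lt_or_eq with hlt | heq
  · have hD : ∀ x ∈ ball (0 : ℂ) 1, 1 - conj (ψ 0) * ψ x ≠ 0 := fun x hx =>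
      one_sub_conj_mul_ne_zero hlt (hψ1 x hx)
    have hk : ‖mobius (ψ 0) (ψ s)‖ ≤ ‖s‖ := by
      refine Complex.norm_le_norm_of_mapsTo_ball (f := fun x => mobius (ψ 0) (ψ x))
        (fun x hx => ((differentiableAt_mobius (hD x hx)).comp x
          (hd.differentiableAt (isOpen_ball.mem_nhds hx))).differentiableWithinAt)
        (fun x hx => by simpa using norm_mobius_le_one hlt (hψ1 x hx)) (mobius_self _)
        (mem_ball_zero_iff.1 hs)
    rwa [mobius, norm_div, div_le_iff₀ (norm_pos_iff.2 (hD s hs))] at hk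
  · have hmax : IsMaxOn (norm ∘ ψ) (ball 0 1) 0 := fun x hx => by simpa [heq] using hψ1 x hx
    have := Complex.eqOn_of_isPreconnected_of_isMaxOn_norm (convex_ball (0 : ℂ) 1).isPreconnected
      isOpen_ball hd h0 hmax hs
    simp only [Function.const_apply] at this
    rw [this, sub_self, norm_zero]
    positivity

lemma one_sub_mul_norm_sub_le {A B : ℂ} {r : ℝ} (hr : 0 ≤ r) (hB : ‖B‖ ≤ 1)
    (h : ‖B - A‖ ≤ r * ‖1 - conj A * B‖) : (1 - r) * ‖A - B‖ ≤ r * (1 - ‖B‖ ^ 2) := by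
  have hsplit : ‖1 - conj A * B‖ ≤ (1 - ‖B‖ ^ 2) + ‖B - A‖ := by
    calc ‖1 - conj A * B‖ = ‖(1 - conj B * B) + conj (B - A) * B‖ := by congr 1; simp; ring
      _ ≤ ‖1 - conj B * B‖ + ‖conj (B - A) * B‖ := norm_add_le _ _
      _ ≤ (1 - ‖B‖ ^ 2) + ‖B - A‖ := by
        rw [norm_one_sub_conj_mul_self hB, norm_mul, RCLike.norm_conj]
        nlinarith [norm_nonneg (B - A)]
  rw [norm_sub_rev]
  nlinarith [mul_le_mul_of_nonneg_left hsplit hr]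

lemma one_sub_mul_norm_sub_le_of_norm_mobius_le {σ : Type*} [Fintype σ] {f : (σ → ℂ) → ℂ}
    (hf : ∀ z, (∀ i, ‖z i‖ < 1) → DifferentiableAt ℂ f z)
    (hf1 : ∀ z, (∀ i, ‖z i‖ < 1) → ‖f z‖ ≤ 1)
    {z w : σ → ℂ} (hz : ∀ i, ‖z i‖ < 1) (hw : ∀ i, ‖w i‖ < 1) {r : ℝ} (hr0 : 0 < r) (hr1 : r < 1)
    (hzw : ∀ i, ‖mobius (z i) (w i)‖ ≤ r) :
    (1 - r) * ‖f z - f w‖ ≤ r * (1 - ‖f w‖ ^ 2) := by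
  -- the analytic disc through `z` (at `0`) and `w` (at `r`), along which Schwarz–Pick applies
  let g : ℂ → σ → ℂ := fun s i => mobius (-z i) (s * (mobius (z i) (w i) / r))
  have hsmall : ∀ s ∈ ball (0 : ℂ) 1, ∀ i, ‖s * (mobius (z i) (w i) / r)‖ < 1 := by
    intro s hs i
    have : ‖mobius (z i) (w i) / r‖ ≤ 1 := by
      rw [norm_div, Complex.norm_real, Real.norm_of_nonneg hr0.le, div_le_one hr0]
      exact hzw i
    rw [norm_mul]
    nlinarith [mem_ball_zero_iff.1 hs, norm_nonneg s]
  have hgD : ∀ s ∈ ball (0 : ℂ) 1, ∀ i, ‖g s i‖ < 1 := fun s hs i =>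
    norm_mobius_lt_one (by simpa using hz i) (hsmall s hs i)
  have hg0 : g 0 = z := by ext i; simp [g]
  have hgr : g r = w := by
    ext i
    simp only [g]
    rw [mul_div_cancel₀ _ (Complex.ofReal_ne_zero.2 hr0.ne'),
      mobius_neg_mobius (hz i) (hw i).le]
  have hd : DifferentiableOn ℂ (f ∘ g) (ball 0 1) := by
    intro s hs
    refine ((hf _ (hgD s hs)).comp s (differentiableAt_pi.2 fun i => ?_)).differentiableWithinAt
    exact (differentiableAt_mobius (one_sub_conj_mul_ne_zero (by simpa using hz i)
      (hsmall s hs i).le)).comp (f := fun s : ℂ => s * (mobius (z i) (w i) / r)) s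
      (differentiableAt_id.mul_const _)
  have hr : (r : ℂ) ∈ ball (0 : ℂ) 1 := by simpa [abs_of_pos hr0] using hr1
  have key := norm_sub_le_norm_mul_norm_one_sub_conj_mul hd
    (fun s hs => by simpa using hf1 _ (hgD s hs)) hr
  simp only [Function.comp_apply, hg0, hgr, Complex.norm_real, Real.norm_of_nonneg hr0.le] at key
  exact one_sub_mul_norm_sub_le hr0.le (hf1 w hw) key

section Reflection

variable {σ : Type*} [Fintype σ]

/-- `p̃(z) = z^n · conj (p (1 / z̄))`, written as the polynomial function it is, so that it is
defined and holomorphic on all of `ℂ^σ`. -/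
def reflection (p : MvPolynomial σ ℂ) (z : σ → ℂ) : ℂ :=
  ∑ α ∈ p.support, conj (coeff α p) * ∏ i, z i ^ (p.degreeOf i - α i)

lemma differentiable_reflection (p : MvPolynomial σ ℂ) : Differentiable ℂ (reflection p) := by
  unfold reflection
  fun_prop

lemma prod_pow_degreeOf_mul_conj_eval_inv (p : MvPolynomial σ ℂ) {z : σ → ℂ}
    (hz : ∀ i, z i ≠ 0) :
    (∏ i, z i ^ p.degreeOf i) * conj (eval (fun i => (conj (z i))⁻¹) p) = reflection p z := by
  rw [eval_eq', map_sum, Finset.mul_sum, reflection]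
  refine Finset.sum_congr rfl fun α hα => ?_
  simp only [map_mul, map_prod, map_pow, map_inv₀, Complex.conj_conj, mul_left_comm _ (conj _),
    ← Finset.prod_mul_distrib]
  congr 1
  refine Finset.prod_congr rfl fun i _ => ?_
  rw [pow_sub₀ _ (hz i) (monomial_le_degreeOf i hα), inv_pow]

end Reflection

namespace Polynomial

lemma coeff_prod_sum_of_natDegree_le {ι R : Type*} [CommSemiring R] (s : Finset ι)
    (f : ι → R[X]) (n : ι → ℕ) (h : ∀ i ∈ s, (f i).natDegree ≤ n i) :
    (∏ i ∈ s, f i).coeff (∑ i ∈ s, n i) = ∏ i ∈ s, (f i).coeff (n i) := by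
  classical
  induction s using Finset.induction_on with
  | empty => simp
  | insert a s ha ih =>
    have hs : ∀ i ∈ s, (f i).natDegree ≤ n i := fun i hi => h i (Finset.mem_insert_of_mem hi)
    rw [Finset.prod_insert ha, Finset.sum_insert ha, Finset.prod_insert ha,
      coeff_mul_add_eq_of_natDegree_le (h a (Finset.mem_insert_self a s))
        ((natDegree_prod_le s f).trans (Finset.sum_le_sum hs)), ih hs]

lemma coeff_X_add_C_pow_mul_C_mul_X_add_one_pow (x y : ℂ) (a b : ℕ) :
    ((X + C x) ^ a * (C y * X + 1) ^ b).coeff (a + b) = y ^ b := by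
  have hx := coeff_pow_of_natDegree_le (m := a) (p := X + C x) (n := 1) (by compute_degree)
  have hy := coeff_pow_of_natDegree_le (m := b) (p := C y * X + 1) (n := 1) (by compute_degree)
  rw [mul_one] at hx hy
  rw [coeff_mul_add_eq_of_natDegree_le (by compute_degree) (by compute_degree), hx, hy]
  simp [coeff_one]

lemma norm_coeff_le_norm_coeff_zero {R : ℂ[X]} (hR : ∀ s : ℂ, ‖s‖ < 1 → R.eval s ≠ 0)
    {N : ℕ} (hN : R.natDegree ≤ N) : ‖R.coeff N‖ ≤ ‖R.coeff 0‖ := by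
  rcases hN.lt_or_eq with hlt | rfl
  · simp [coeff_eq_zero_of_natDegree_lt hlt]
  · have hroots : 1 ≤ ‖R.roots.prod‖ := by
      rw [show ‖R.roots.prod‖ = normHom R.roots.prod from rfl, map_multiset_prod]
      refine Multiset.one_le_prod fun x hx => ?_
      obtain ⟨β, hβ, rfl⟩ := Multiset.mem_map.1 hx
      exact not_lt.1 fun h => hR β h (mem_roots'.1 hβ).2
    rw [(IsAlgClosed.splits R).coeff_zero_eq_leadingCoeff_mul_prod_roots, coeff_natDegree,
      norm_mul, norm_mul, norm_pow, norm_neg, norm_one, one_pow, one_mul]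
    exact le_mul_of_one_le_right (norm_nonneg _) hroots

end Polynomial

section Schur

variable {σ : Type*} [Fintype σ]

/-- `∏ᵢ (1 + z̄ᵢ s)^{nᵢ} · p((s + zᵢ) / (1 + z̄ᵢ s))ᵢ` with the denominators cleared: the
restriction of `p` to the Möbius disc through `z`, made into a polynomial of degree `≤ ∑ nᵢ`. -/
def mobiusSlice (p : MvPolynomial σ ℂ) (z : σ → ℂ) : Polynomial ℂ :=
  ∑ α ∈ p.support, Polynomial.C (coeff α p) * ∏ i, (Polynomial.X + Polynomial.C (z i)) ^ α i *
    (Polynomial.C (conj (z i)) * Polynomial.X + 1) ^ (p.degreeOf i - α i)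

variable (p : MvPolynomial σ ℂ) (z : σ → ℂ)

lemma natDegree_mobiusSlice_le : (mobiusSlice p z).natDegree ≤ ∑ i, p.degreeOf i := by
  refine Polynomial.natDegree_sum_le_of_forall_le _ _ fun α hα => ?_
  refine (Polynomial.natDegree_C_mul_le _ _).trans <| (Polynomial.natDegree_prod_le _ _).trans <|
    Finset.sum_le_sum fun i _ => ?_
  calc _ ≤ α i + (p.degreeOf i - α i) := by compute_degree
    _ = p.degreeOf i := Nat.add_sub_cancel' (monomial_le_degreeOf i hα)

lemma coeff_zero_mobiusSlice : (mobiusSlice p z).coeff 0 = eval z p := by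
  simp [mobiusSlice, Polynomial.coeff_zero_eq_eval_zero, Polynomial.eval_finsetSum,
    Polynomial.eval_prod, eval_eq']

lemma coeff_mobiusSlice_sum_degreeOf :
    (mobiusSlice p z).coeff (∑ i, p.degreeOf i) = conj (reflection p z) := by
  rw [mobiusSlice, Polynomial.finsetSum_coeff, reflection, map_sum]
  refine Finset.sum_congr rfl fun α hα => ?_
  have hn : ∑ i, p.degreeOf i = ∑ i, (α i + (p.degreeOf i - α i)) :=
    Finset.sum_congr rfl fun i _ => (Nat.add_sub_cancel' (monomial_le_degreeOf i hα)).symm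
  rw [Polynomial.coeff_C_mul, hn, Polynomial.coeff_prod_sum_of_natDegree_le _ _ _
    fun i _ => by compute_degree]
  simp [Polynomial.coeff_X_add_C_pow_mul_C_mul_X_add_one_pow]

lemma eval_mobiusSlice {s : ℂ} (hs : ∀ i, 1 + conj (z i) * s ≠ 0) :
    (mobiusSlice p z).eval s =
      (∏ i, (1 + conj (z i) * s) ^ p.degreeOf i) * eval (fun i => mobius (-z i) s) p := by
  rw [mobiusSlice, Polynomial.eval_finsetSum, eval_eq', Finset.mul_sum]
  refine Finset.sum_congr rfl fun α hα => ?_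
  simp only [Polynomial.eval_mul, Polynomial.eval_C, Polynomial.eval_prod, Polynomial.eval_pow,
    Polynomial.eval_add, Polynomial.eval_X, Polynomial.eval_one, mul_left_comm _ (coeff α p),
    ← Finset.prod_mul_distrib]
  congr 1
  refine Finset.prod_congr rfl fun i _ => ?_
  have hm : mobius (-z i) s = (s + z i) / (1 + conj (z i) * s) := by simp [mobius]
  rw [hm, div_pow, ← pow_sub_mul_pow _ (monomial_le_degreeOf i hα)]
  rw [mul_assoc, mul_div_cancel₀ _ (pow_ne_zero _ (hs i))]
  ring

end Schur

lemma norm_reflection_le_norm_eval {σ : Type*} [Fintype σ] {p : MvPolynomial σ ℂ}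
    (hp : ∀ z : σ → ℂ, (∀ i, ‖z i‖ < 1) → eval z p ≠ 0) {z : σ → ℂ} (hz : ∀ i, ‖z i‖ < 1) :
    ‖reflection p z‖ ≤ ‖eval z p‖ := by
  have hz' : ∀ i, ‖-z i‖ < 1 := by simpa using hz
  have hR : ∀ s : ℂ, ‖s‖ < 1 → (mobiusSlice p z).eval s ≠ 0 := by
    intro s hs
    have hD : ∀ i, 1 + conj (z i) * s ≠ 0 := fun i => by
      simpa using one_sub_conj_mul_ne_zero (hz' i) hs.le
    rw [eval_mobiusSlice p z hD]
    exact mul_ne_zero (Finset.prod_ne_zero_iff.2 fun i _ => pow_ne_zero _ (hD i))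
      (hp _ fun i => norm_mobius_lt_one (hz' i) hs)
  simpa [coeff_mobiusSlice_sum_degreeOf, coeff_zero_mobiusSlice] using
    Polynomial.norm_coeff_le_norm_coeff_zero hR (natDegree_mobiusSlice_le p z)

lemma Polynomial.exists_tendsto_conj_eval_inv_div_eval {q : Polynomial ℂ} (hq : q ≠ 0) :
    ∃ L : ℂ, ‖L‖ = 1 ∧
      Tendsto (fun t : ℝ => conj (q.eval (t : ℂ)⁻¹) / q.eval (t : ℂ)) (𝓝[≠] 1) (𝓝 L) := by
  -- factor out the zero of `q` at `1`: the factors `(t⁻¹ - 1)^k` and `(t - 1)^k` cancel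
  -- up to `(-t⁻¹)^k`
  set k := q.rootMultiplicity 1
  set q₁ := q /ₘ (Polynomial.X - Polynomial.C 1) ^ k
  have hfac : ∀ w, q.eval w = (w - 1) ^ k * q₁.eval w := fun w => by
    conv_lhs => rw [← q.pow_mul_divByMonic_rootMultiplicity_eq 1]
    simp [q₁, k]
  have h1 : q₁.eval 1 ≠ 0 := eval_divByMonic_pow_rootMultiplicity_ne_zero 1 hq
  let G : ℝ → ℂ := fun t => (-(t : ℂ)⁻¹) ^ k * conj (q₁.eval (t : ℂ)⁻¹) / q₁.eval (t : ℂ)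
  refine ⟨G 1, by simp [G, h1], ?_⟩
  have hG : ContinuousAt G 1 := by
    have := Complex.continuous_ofReal
    exact ContinuousAt.div (by fun_prop (disch := simp)) (by fun_prop) (by simpa using h1)
  refine (hG.tendsto.mono_left nhdsWithin_le_nhds).congr' ?_
  filter_upwards [self_mem_nhdsWithin, (isOpen_ne (x := (0 : ℝ))).mem_nhds one_ne_zero |>
    mem_nhdsWithin_of_mem_nhds] with t ht1 ht0
  have ht1' : (t : ℂ) - 1 ≠ 0 := sub_ne_zero.2 (by exact_mod_cast ht1)
  have ht0' : (t : ℂ) ≠ 0 := by exact_mod_cast ht0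
  have hinv : (t : ℂ)⁻¹ - 1 = -(t : ℂ)⁻¹ * ((t : ℂ) - 1) := by field_simp; ring
  simp only [G, hfac, map_mul, map_pow, hinv, map_neg, map_inv₀, map_sub, map_one,
    Complex.conj_ofReal, mul_pow]
  rw [mul_comm ((-(t : ℂ)⁻¹) ^ k) (((t : ℂ) - 1) ^ k), mul_assoc,
    mul_div_mul_left _ _ (pow_ne_zero _ ht1')]

lemma eval_aeval_X_mul_C {σ : Type*} (p : MvPolynomial σ ℂ) (ζ : σ → ℂ) (w : ℂ) :
    (aeval (fun i => Polynomial.X * Polynomial.C (ζ i)) p).eval w = eval (fun i => w * ζ i) p := by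
  induction p using MvPolynomial.induction_on <;> simp_all [mul_comm w]

lemma exists_tendsto_reflection_div_eval_ofReal_mul {σ : Type*} [Fintype σ]
    {p : MvPolynomial σ ℂ} (hp0 : eval 0 p ≠ 0) {ζ : σ → ℂ} (hζ : ∀ i, ‖ζ i‖ = 1) :
    ∃ L : ℂ, ‖L‖ = 1 ∧ Tendsto (fun t : ℝ =>
      reflection p (fun i => t * ζ i) / eval (fun i => t * ζ i) p) (𝓝[<] 1) (𝓝 L) := by
  set q : Polynomial ℂ := aeval (fun i => Polynomial.X * Polynomial.C (ζ i)) p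
  have hq : ∀ w, q.eval w = eval (fun i => w * ζ i) p := eval_aeval_X_mul_C p ζ
  have hq0 : q ≠ 0 := fun h => hp0 (by simpa [h] using (hq 0).symm)
  obtain ⟨L, hL, hlim⟩ := Polynomial.exists_tendsto_conj_eval_inv_div_eval hq0
  set Z := ∏ i, ζ i ^ p.degreeOf i
  refine ⟨Z * L, by simp [Z, hζ, hL], ?_⟩
  have hpow : Tendsto (fun t : ℝ => (t : ℂ) ^ ∑ i, p.degreeOf i) (𝓝[<] 1) (𝓝 1) :=
    ((Complex.continuous_ofReal.pow _).tendsto' 1 1 (by simp)).mono_left nhdsWithin_le_nhds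
  have := (tendsto_const_nhds (x := Z)).mul (hpow.mul (hlim.mono_left (nhdsLT_le_nhdsNE 1)))
  rw [one_mul] at this
  refine this.congr' ?_
  filter_upwards [Ioo_mem_nhdsLT one_pos] with t ht
  have ht0 : (t : ℂ) ≠ 0 := by exact_mod_cast ht.1.ne'
  rw [← prod_pow_degreeOf_mul_conj_eval_inv p fun i =>
    mul_ne_zero ht0 (norm_ne_zero_iff.1 (by simp [hζ]))]
  have hinv : ∀ i, (conj ((t : ℂ) * ζ i))⁻¹ = (t : ℂ)⁻¹ * ζ i := fun i => by
    rw [map_mul, Complex.conj_ofReal, mul_inv, ← Complex.inv_eq_conj (hζ i), inv_inv]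
  simp only [hinv, ← hq, mul_pow, Finset.prod_mul_distrib, Finset.prod_pow_eq_pow_sum, Z]
  ring

lemma norm_mobius_ofReal_mul_le {x ζ : ℂ} {t c : ℝ} (hζ : ‖ζ‖ = 1) (hx : ‖x‖ < 1)
    (ht0 : 0 ≤ t) (ht1 : t < 1) (hxζ : ‖x - ζ‖ ≤ c * (1 - t)) (htx : 1 - t ≤ c * (1 - ‖x‖)) :
    ‖mobius x (t * ζ)‖ ≤ 1 - 1 / (2 * c * (3 * c + 1) ^ 2) := by
  -- in `‖mobius x (t ζ)‖² = 1 - P / D²` (`norm_mobius_sq`), `P ≥ δ² / c` and `D ≤ (3c + 1) δ`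
  set δ := 1 - t
  have hδ : 0 < δ := by simp only [δ]; linarith
  have hw : ‖(t : ℂ) * ζ‖ = t := by simp [hζ, abs_of_nonneg ht0]
  have hwζ : ‖ζ - t * ζ‖ = δ := by
    rw [← one_sub_mul, norm_mul, hζ, mul_one, ← Complex.ofReal_one, ← Complex.ofReal_sub,
      Complex.norm_real, Real.norm_of_nonneg hδ.le]
  have h1x : 1 - ‖x‖ ≤ c * δ := by
    have := norm_sub_norm_le ζ x
    rw [hζ, norm_sub_rev] at this
    linarith
  have hc : 1 ≤ c := by nlinarith
  have hxw : ‖x - t * ζ‖ ≤ (c + 1) * δ :=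
    (norm_sub_le_norm_sub_add_norm_sub x ζ _).trans (by rw [hwζ]; linarith)
  have hD : ‖1 - conj x * (t * ζ)‖ ≤ (3 * c + 1) * δ := by
    calc ‖1 - conj x * (t * ζ)‖ = ‖(1 - conj x * x) + conj x * (x - t * ζ)‖ := by ring_nf
      _ ≤ (1 - ‖x‖ ^ 2) + ‖x‖ * ‖x - t * ζ‖ := by
        rw [← norm_one_sub_conj_mul_self hx.le, ← RCLike.norm_conj x, ← norm_mul]
        exact norm_add_le _ _
      _ ≤ 2 * (c * δ) + 1 * ((c + 1) * δ) := by
        gcongr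
        nlinarith [norm_nonneg x]
      _ = (3 * c + 1) * δ := by ring
  have hP : δ ^ 2 / c ≤ (1 - ‖x‖ ^ 2) * (1 - ‖(t : ℂ) * ζ‖ ^ 2) := by
    have h1 : δ ≤ c * (1 - ‖x‖ ^ 2) := by nlinarith [norm_nonneg x]
    have h2 : δ ≤ 1 - t ^ 2 := by nlinarith
    rw [hw, div_le_iff₀ (by linarith)]
    nlinarith [mul_le_mul h1 h2 hδ.le (by linarith)]
  have hDpos : 0 < ‖1 - conj x * (t * ζ)‖ :=
    norm_pos_iff.2 (one_sub_conj_mul_ne_zero hx (by rw [hw]; exact ht1.le))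
  set ε := 1 / (2 * c * (3 * c + 1) ^ 2)
  have hε : ε ≤ 1 := by
    rw [div_le_one (by positivity)]
    nlinarith
  have hratio : 2 * ε ≤ (1 - ‖x‖ ^ 2) * (1 - ‖(t : ℂ) * ζ‖ ^ 2) / ‖1 - conj x * (t * ζ)‖ ^ 2 :=
    calc 2 * ε = δ ^ 2 / c / ((3 * c + 1) * δ) ^ 2 := by simp only [ε]; field_simp
      _ ≤ δ ^ 2 / c / ‖1 - conj x * (t * ζ)‖ ^ 2 :=
        div_le_div_of_nonneg_left (by positivity) (by positivity) (pow_le_pow_left₀ hDpos.le hD 2)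
      _ ≤ _ := div_le_div_of_nonneg_right hP (sq_nonneg _)
  have hsq := norm_mobius_sq hx (by rw [hw]; exact ht1.le)
  exact le_of_pow_le_pow_left₀ two_ne_zero (by linarith) (by rw [hsq]; nlinarith [sq_nonneg ε])

lemma tendsto_of_one_sub_mul_norm_sub_le {α : Type*} {l : Filter α} {u v : α → ℂ} {L : ℂ}
    {r : ℝ} (hr : r < 1) (hL : ‖L‖ = 1) (hv : Tendsto v l (𝓝 L))
    (huv : ∀ᶠ x in l, (1 - r) * ‖u x - v x‖ ≤ r * (1 - ‖v x‖ ^ 2)) : Tendsto u l (𝓝 L) := by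
  have hbound : Tendsto (fun x => r * (1 - ‖v x‖ ^ 2) / (1 - r)) l (𝓝 0) := by
    simpa [hL] using (((hv.norm.pow 2).const_sub 1).const_mul r).div_const (1 - r)
  have hsub : Tendsto (fun x => u x - v x) l (𝓝 0) :=
    squeeze_zero_norm' (huv.mono fun x hx => by rw [le_div_iff₀ (sub_pos.2 hr)]; linarith)
      hbound
  simpa using hsub.add hv

section ApproachRegion

variable {d : ℕ} {ζ : Fin d → ℂ}

lemma tendsto_norm_apply_nhdsWithin_polydiskAR (hζ : ∀ i, ‖ζ i‖ = 1) (c : ℝ) (i₀ : Fin d) :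
    Tendsto (fun z : Fin d → ℂ => ‖z i₀‖) (𝓝[PolydiskAR d ζ c] ζ) (𝓝[<] 1) := by
  refine tendsto_nhdsWithin_iff.2 ⟨?_, eventually_nhdsWithin_of_forall fun z hz => hz.1 i₀⟩
  simpa [hζ] using ((continuous_apply i₀).norm.tendsto ζ).mono_left nhdsWithin_le_nhds

lemma norm_mobius_le_of_mem_polydiskAR (hζ : ∀ i, ‖ζ i‖ = 1) {c : ℝ} {z : Fin d → ℂ}
    (hz : z ∈ PolydiskAR d ζ c) (i₀ i : Fin d) :
    ‖mobius (z i) (‖z i₀‖ * ζ i)‖ ≤ 1 - 1 / (2 * c * (3 * c + 1) ^ 2) :=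
  norm_mobius_ofReal_mul_le (hζ i) (hz.1 i) (norm_nonneg _) (hz.1 i₀) (hz.2 i i₀).1
    (hz.2 i₀ i).2.2.2

lemma tendsto_reflection_div_eval_nhdsWithin_polydiskAR {p : MvPolynomial (Fin d) ℂ}
    (hp : ∀ z : Fin d → ℂ, (∀ i, ‖z i‖ < 1) → eval z p ≠ 0) (hζ : ∀ i, ‖ζ i‖ = 1) {L : ℂ}
    (hL : ‖L‖ = 1) (hlim : Tendsto (fun t : ℝ =>
      reflection p (fun i => t * ζ i) / eval (fun i => t * ζ i) p) (𝓝[<] 1) (𝓝 L))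
    {c : ℝ} (hc : 1 < c) (i₀ : Fin d) :
    Tendsto (fun z => reflection p z / eval z p) (𝓝[PolydiskAR d ζ c] ζ) (𝓝 L) := by
  have hc0 : 0 < c := by linarith
  set r := 1 - 1 / (2 * c * (3 * c + 1) ^ 2)
  have hr0 : 0 < r := by
    simp only [r, sub_pos]
    rw [div_lt_one (by positivity)]
    nlinarith
  have hr1 : r < 1 := sub_lt_self 1 (by positivity)
  refine tendsto_of_one_sub_mul_norm_sub_le hr1 hL
    (hlim.comp (tendsto_norm_apply_nhdsWithin_polydiskAR hζ c i₀)) ?_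
  filter_upwards [self_mem_nhdsWithin] with z hz
  have hw : ∀ i, ‖(‖z i₀‖ : ℂ) * ζ i‖ < 1 := fun i => by simpa [hζ] using hz.1 i₀
  exact one_sub_mul_norm_sub_le_of_norm_mobius_le (f := fun w => reflection p w / eval w p)
    (fun w hw => by
      have := differentiable_reflection p
      have := (AnalyticOnNhd.eval_mvPolynomial p w trivial).differentiableAt
      fun_prop (disch := exact hp w hw))
    (fun w hw => by
      rw [norm_div, div_le_one (norm_pos_iff.2 (hp w hw))]
      exact norm_reflection_le_norm_eval hp hw)
    hz.1 hw hr0 hr1 fun i => norm_mobius_le_of_mem_polydiskAR hζ hz i₀ i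

end ApproachRegion

end

/-- A rational inner function `p̃/p` on the polydisk has a non-tangential limit of
modulus one at every point of the `d`-torus. -/
theorem stmt8 (d : ℕ) (p : MvPolynomial (Fin d) ℂ)
    (hp : ∀ z : Fin d → ℂ, (∀ i, ‖z i‖ < 1) → eval z p ≠ 0) :
    ∀ ζ : Fin d → ℂ, (∀ i, ‖ζ i‖ = 1) →
      ∃ L : ℂ, ‖L‖ = 1 ∧ ∀ c : ℝ, 1 < c →
        Tendsto (fun z : Fin d → ℂ =>
            ((∏ i, z i ^ p.degreeOf i) *
              (starRingEnd ℂ) (eval (fun i => ((starRingEnd ℂ) (z i))⁻¹) p)) / eval z p)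
          (nhdsWithin ζ (PolydiskAR d ζ c)) (nhds L) := by
  intro ζ hζ
  rcases isEmpty_or_nonempty (Fin d) with hd | ⟨⟨i₀⟩⟩
  · refine ⟨conj (eval ζ p) / eval ζ p, ?_, fun c _ => tendsto_const_nhds.congr fun z => ?_⟩
    · rw [norm_div, RCLike.norm_conj, div_self (norm_ne_zero_iff.2 (hp ζ isEmptyElim))]
    · simp [Subsingleton.elim z ζ, Subsingleton.elim (fun i => (conj (ζ i))⁻¹) ζ]
  · obtain ⟨L, hL, hlim⟩ := exists_tendsto_reflection_div_eval_ofReal_mul (hp 0 (by simp)) hζ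
    refine ⟨L, hL, fun c hc =>
      (tendsto_reflection_div_eval_nhdsWithin_polydiskAR hp hζ hL hlim hc i₀).congr' ?_⟩
    have hζ0 : ∀ i, ζ i ≠ 0 := fun i => norm_ne_zero_iff.1 (by simp [hζ])
    filter_upwards [nhdsWithin_le_nhds (eventually_all.2 fun i =>
      (continuous_apply i).continuousAt.eventually_ne (hζ0 i))] with z hz
    rw [prod_pow_degreeOf_mul_conj_eval_inv p hz]
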